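/- Let A = (2-σ)I - M with M ≥ 0 entrywise, ‖M‖₁ = σ < 1, and b ≥ 0 with ‖b‖₁ < (1-σ)². Then the function g(μ) = ‖(A - μI)⁻¹ b‖₁ - μ has exactly one root μ* in [0, 1-σ]; consequently the equation Ax - ‖x‖₁x = b has a unique nonnegative solution x* with ‖x*‖₁ + σ < 1, given by x* = (A - μ*I)⁻¹ b. -/

import Mathlib

open Matrix Set

/-- ℓ¹ norm of a vector in ℝⁿ. -/
noncomputable def l1 {n : ℕ} (x : Fin n → ℝ) : ℝ := ∑ i, |x i|

/-- Induced operator 1-norm of a real matrix (maximum column sum). -/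
noncomputable def op1 {n : ℕ} (A : Matrix (Fin n) (Fin n) ℝ) : ℝ := ⨆ j, ∑ i, |A i j|

/-!
For `μ ≤ 1 - σ` the matrix `A - μI = (2 - σ - μ)I - M` has the form `cI - M` with
`c - σ ≥ 1 - σ > 0`, where `σ` bounds the column sums of `M ≥ 0`. Summing the coordinates of
`(cI - M)x` gives `(c - σ) Σ xᵢ ≤ Σ ((cI - M)x)ᵢ` for `x ≥ 0`; applied to the negative part of `x`
this shows that `cI - M` is inverse-nonnegative, and applied to `x` itself it gives
`(1 - σ)‖x‖₁ ≤ ‖b‖₁`. Hence `x(μ) = (A - μI)⁻¹b ≥ 0` and `‖x(μ)‖₁ < 1 - σ`.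

For `μ₁ < μ₂` the difference `x(μ₂) - x(μ₁)` solves the system at `μ₂` with right-hand side
`(μ₂ - μ₁) x(μ₁) ≥ 0`, so `‖x(μ)‖₁` increases with slope at most `‖x(μ₁)‖₁ / (1 - σ) < 1`, and
`g(μ) = ‖x(μ)‖₁ - μ` is strictly decreasing. As `g(0) ≥ 0 > g(1 - σ)` and `g` is continuous, it
has exactly one root. A nonnegative solution `y` of `Ay - ‖y‖₁y = b` is `x(‖y‖₁)`, so `‖y‖₁` is
that root.
-/

section InversePositivity

variable {ι : Type*} [Fintype ι] {M : Matrix ι ι ℝ} {σ c : ℝ} {x y : ι → ℝ}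

theorem mulVec_le_mulVec_of_nonneg (hM : ∀ i j, 0 ≤ M i j) (hxy : x ≤ y) : M *ᵥ x ≤ M *ᵥ y :=
  fun i => Finset.sum_le_sum fun j _ => mul_le_mul_of_nonneg_left (hxy j) (hM i j)

theorem sum_mulVec_le_of_colSum_le (hcol : ∀ j, ∑ i, M i j ≤ σ) (hx : 0 ≤ x) :
    ∑ i, (M *ᵥ x) i ≤ σ * ∑ i, x i :=
  calc ∑ i, (M *ᵥ x) i = ∑ j, (∑ i, M i j) * x j := by
        simp only [mulVec, dotProduct, Finset.sum_mul]; exact Finset.sum_comm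
    _ ≤ ∑ j, σ * x j := Finset.sum_le_sum fun j _ => mul_le_mul_of_nonneg_right (hcol j) (hx j)
    _ = σ * ∑ j, x j := (Finset.mul_sum ..).symm

variable [DecidableEq ι]

theorem smul_one_sub_mulVec (c : ℝ) (M : Matrix ι ι ℝ) (x : ι → ℝ) :
    (c • 1 - M) *ᵥ x = c • x - M *ᵥ x := by
  rw [sub_mulVec, smul_mulVec, one_mulVec]

theorem sub_mul_sum_le_sum_smul_one_sub_mulVec (hcol : ∀ j, ∑ i, M i j ≤ σ) (hx : 0 ≤ x) :
    (c - σ) * ∑ i, x i ≤ ∑ i, ((c • 1 - M) *ᵥ x) i := by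
  have := sum_mulVec_le_of_colSum_le hcol hx
  simp only [smul_one_sub_mulVec, Pi.sub_apply, Pi.smul_apply, smul_eq_mul,
    Finset.sum_sub_distrib, ← Finset.mul_sum]
  linarith

theorem nonneg_of_smul_one_sub_mulVec_nonneg (hM : ∀ i j, 0 ≤ M i j)
    (hcol : ∀ j, ∑ i, M i j ≤ σ) (hc : σ < c) (h : 0 ≤ (c • 1 - M) *ᵥ x) : 0 ≤ x := by
  have hneg : 0 ≤ x⁻ := negPart_nonneg x
  have hle : (c • 1 - M) *ᵥ x⁻ ≤ 0 := by
    intro i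
    rw [smul_one_sub_mulVec] at h ⊢
    have hi := h i
    simp only [Pi.sub_apply, Pi.smul_apply, smul_eq_mul, Pi.zero_apply, Pi.negPart_apply] at hi ⊢
    rcases le_total 0 (x i) with hxi | hxi
    · rw [negPart_eq_zero.2 hxi, mul_zero, zero_sub, neg_nonpos]
      exact mulVec_le_mulVec_of_nonneg hM hneg i |>.trans_eq' (by simp)
    · have hmono := mulVec_le_mulVec_of_nonneg hM (neg_le_negPart x) i
      rw [mulVec_neg, Pi.neg_apply] at hmono
      rw [negPart_eq_neg.2 hxi]
      linarith
  have hsum : (c - σ) * ∑ i, x⁻ i ≤ 0 :=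
    (sub_mul_sum_le_sum_smul_one_sub_mulVec hcol hneg).trans (Finset.sum_nonpos fun i _ => hle i)
  have hzero := (Finset.sum_eq_zero_iff_of_nonneg fun i _ => hneg i).1 <| le_antisymm
    (nonpos_of_mul_nonpos_right hsum (sub_pos.2 hc)) (Finset.sum_nonneg fun i _ => hneg i)
  exact fun i => negPart_eq_zero.1 (hzero i (Finset.mem_univ i))

theorem isUnit_det_smul_one_sub (hM : ∀ i j, 0 ≤ M i j) (hcol : ∀ j, ∑ i, M i j ≤ σ)
    (hc : σ < c) : IsUnit (c • 1 - M).det := by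
  rw [isUnit_iff_ne_zero, Ne, ← exists_mulVec_eq_zero_iff]
  rintro ⟨v, hv0, hv⟩
  have hpos := nonneg_of_smul_one_sub_mulVec_nonneg hM hcol hc hv.ge
  have hneg := nonneg_of_smul_one_sub_mulVec_nonneg (x := -v) hM hcol hc
    (by rw [mulVec_neg, hv, neg_zero])
  exact hv0 (le_antisymm (neg_nonneg.1 hneg) hpos)

theorem smul_one_sub_mulVec_sub {c₁ c₂ : ℝ} {x₁ x₂ b : ι → ℝ}
    (h₁ : (c₁ • 1 - M) *ᵥ x₁ = b) (h₂ : (c₂ • 1 - M) *ᵥ x₂ = b) :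
    (c₂ • 1 - M) *ᵥ (x₂ - x₁) = (c₁ - c₂) • x₁ := by
  rw [smul_one_sub_mulVec] at h₁ h₂ ⊢
  rw [mulVec_sub, sub_smul]
  ext i
  have e₁ := congrFun h₁ i
  have e₂ := congrFun h₂ i
  simp only [Pi.sub_apply, Pi.smul_apply, smul_eq_mul] at e₁ e₂ ⊢
  linarith

theorem continuousAt_inv_sub_smul_one_mulVec (A : Matrix ι ι ℝ) (b : ι → ℝ) {μ : ℝ}
    (h : IsUnit (A - μ • 1).det) : ContinuousAt (fun μ : ℝ => (A - μ • 1)⁻¹ *ᵥ b) μ := by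
  have hinv : ContinuousAt Inv.inv (A - μ • 1) :=
    continuousAt_matrix_inv _ (Ring.inverse_eq_inv' (G₀ := ℝ) ▸ continuousAt_inv₀ h.ne_zero)
  exact (continuous_id.matrix_mulVec continuous_const).continuousAt.comp
    (hinv.comp (f := fun μ : ℝ => A - μ • 1) (by fun_prop))

theorem mulVec_nonsing_inv_mulVec {B : Matrix ι ι ℝ} (hB : IsUnit B.det) (b : ι → ℝ) :
    B *ᵥ (B⁻¹ *ᵥ b) = b := by
  rw [mulVec_mulVec, mul_nonsing_inv _ hB, one_mulVec]

theorem eq_inv_mulVec_of_mulVec_eq {B : Matrix ι ι ℝ} {b : ι → ℝ} (hB : IsUnit B.det)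
    (h : B *ᵥ x = b) : x = B⁻¹ *ᵥ b := by
  rw [← h, mulVec_mulVec, nonsing_inv_mul _ hB, one_mulVec]

end InversePositivity

section FixedPoint

variable {n : ℕ} {M A : Matrix (Fin n) (Fin n) ℝ} {σ μ : ℝ} {b : Fin n → ℝ}

theorem l1_nonneg (x : Fin n → ℝ) : 0 ≤ l1 x :=
  Finset.sum_nonneg fun i _ => abs_nonneg (x i)

theorem l1_eq_sum_of_nonneg {x : Fin n → ℝ} (hx : 0 ≤ x) : l1 x = ∑ i, x i :=
  Finset.sum_congr rfl fun i _ => abs_of_nonneg (hx i)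

theorem continuous_l1 : Continuous (l1 : (Fin n → ℝ) → ℝ) :=
  continuous_finsetSum _ fun i _ => (continuous_apply i).abs

theorem colSum_le_op1 (hM : ∀ i j, 0 ≤ M i j) (j : Fin n) : ∑ i, M i j ≤ op1 M :=
  calc ∑ i, M i j = ∑ i, |M i j| := Finset.sum_congr rfl fun i _ => (abs_of_nonneg (hM i j)).symm
    _ ≤ op1 M := le_ciSup (f := fun j => ∑ i, |M i j|) (Set.finite_range _).bddAbove j

theorem sub_smul_one_eq (hA : A = (2 - σ) • 1 - M) (μ : ℝ) : A - μ • 1 = (2 - σ - μ) • 1 - M := by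
  rw [hA, sub_right_comm, ← sub_smul]

theorem isUnit_det_sub_smul_one (hM : ∀ i j, 0 ≤ M i j) (hcol : ∀ j, ∑ i, M i j ≤ σ)
    (hA : A = (2 - σ) • 1 - M) (hμ : μ < 2 - 2 * σ) : IsUnit (A - μ • 1).det := by
  rw [sub_smul_one_eq hA]
  exact isUnit_det_smul_one_sub hM hcol (by linarith)

theorem sub_smul_one_mulVec_inv_mulVec (hM : ∀ i j, 0 ≤ M i j) (hcol : ∀ j, ∑ i, M i j ≤ σ)
    (hA : A = (2 - σ) • 1 - M) (hμ : μ < 2 - 2 * σ) (b : Fin n → ℝ) :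
    (A - μ • 1) *ᵥ ((A - μ • 1)⁻¹ *ᵥ b) = b :=
  mulVec_nonsing_inv_mulVec (isUnit_det_sub_smul_one hM hcol hA hμ) b

theorem inv_sub_smul_one_mulVec_nonneg (hM : ∀ i j, 0 ≤ M i j) (hcol : ∀ j, ∑ i, M i j ≤ σ)
    (hA : A = (2 - σ) • 1 - M) (hμ : μ < 2 - 2 * σ) (hb : 0 ≤ b) :
    0 ≤ (A - μ • 1)⁻¹ *ᵥ b := by
  refine nonneg_of_smul_one_sub_mulVec_nonneg (c := 2 - σ - μ) hM hcol (by linarith) ?_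
  rwa [← sub_smul_one_eq hA, sub_smul_one_mulVec_inv_mulVec hM hcol hA hμ]

theorem l1_inv_sub_smul_one_mulVec_lt (hM : ∀ i j, 0 ≤ M i j) (hcol : ∀ j, ∑ i, M i j ≤ σ)
    (hσ : σ < 1) (hA : A = (2 - σ) • 1 - M) (hμ : μ ≤ 1 - σ) (hb : 0 ≤ b)
    (hb1 : l1 b < (1 - σ) ^ 2) : l1 ((A - μ • 1)⁻¹ *ᵥ b) < 1 - σ := by
  have hx := inv_sub_smul_one_mulVec_nonneg (μ := μ) hM hcol hA (by linarith) hb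
  have hsum := sub_mul_sum_le_sum_smul_one_sub_mulVec (c := 2 - σ - μ) hcol hx
  rw [← sub_smul_one_eq hA, sub_smul_one_mulVec_inv_mulVec hM hcol hA (by linarith),
    ← l1_eq_sum_of_nonneg hx, ← l1_eq_sum_of_nonneg hb] at hsum
  nlinarith [l1_nonneg ((A - μ • 1)⁻¹ *ᵥ b)]

theorem l1_sub_l1_lt_sub (hM : ∀ i j, 0 ≤ M i j) (hcol : ∀ j, ∑ i, M i j ≤ σ) (hσ : σ < 1)
    (hA : A = (2 - σ) • 1 - M) {μ₁ μ₂ : ℝ} {x₁ x₂ : Fin n → ℝ} (h12 : μ₁ < μ₂)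
    (hμ₂ : μ₂ ≤ 1 - σ) (hx₁ : 0 ≤ x₁) (hl1 : l1 x₁ < 1 - σ)
    (h₁ : (A - μ₁ • 1) *ᵥ x₁ = b) (h₂ : (A - μ₂ • 1) *ᵥ x₂ = b) :
    l1 x₂ - l1 x₁ < μ₂ - μ₁ := by
  rw [sub_smul_one_eq hA] at h₁ h₂
  have hd := smul_one_sub_mulVec_sub h₁ h₂
  rw [show 2 - σ - μ₁ - (2 - σ - μ₂) = μ₂ - μ₁ by ring] at hd
  have hd0 : 0 ≤ x₂ - x₁ := nonneg_of_smul_one_sub_mulVec_nonneg hM hcol (by linarith)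
    (hd ▸ smul_nonneg (sub_nonneg.2 h12.le) hx₁)
  have hsum := sub_mul_sum_le_sum_smul_one_sub_mulVec (c := 2 - σ - μ₂) hcol hd0
  have hx₂ : 0 ≤ x₂ := by simpa using add_nonneg hd0 hx₁
  simp only [hd, Pi.sub_apply, Pi.smul_apply, smul_eq_mul, Finset.sum_sub_distrib,
    ← Finset.mul_sum, ← l1_eq_sum_of_nonneg hx₁, ← l1_eq_sum_of_nonneg hx₂] at hsum
  have hmono : 0 ≤ l1 x₂ - l1 x₁ := by
    rw [l1_eq_sum_of_nonneg hx₁, l1_eq_sum_of_nonneg hx₂, ← Finset.sum_sub_distrib]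
    exact Finset.sum_nonneg fun i _ => hd0 i
  nlinarith

theorem strictAntiOn_l1_inv_sub_smul_one_mulVec_sub (hM : ∀ i j, 0 ≤ M i j)
    (hcol : ∀ j, ∑ i, M i j ≤ σ) (hσ : σ < 1) (hA : A = (2 - σ) • 1 - M) (hb : 0 ≤ b)
    (hb1 : l1 b < (1 - σ) ^ 2) :
    StrictAntiOn (fun μ => l1 ((A - μ • 1)⁻¹ *ᵥ b) - μ) (Iic (1 - σ)) := by
  intro μ₁ hμ₁ μ₂ hμ₂ h12
  have hsol : ∀ μ ∈ Iic (1 - σ), (A - μ • 1) *ᵥ ((A - μ • 1)⁻¹ *ᵥ b) = b := fun μ hμ =>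
    sub_smul_one_mulVec_inv_mulVec hM hcol hA (by linarith [mem_Iic.1 hμ]) b
  have := l1_sub_l1_lt_sub hM hcol hσ hA h12 hμ₂
    (inv_sub_smul_one_mulVec_nonneg hM hcol hA (by linarith [mem_Iic.1 hμ₁]) hb)
    (l1_inv_sub_smul_one_mulVec_lt hM hcol hσ hA hμ₁ hb hb1) (hsol μ₁ hμ₁) (hsol μ₂ hμ₂)
  dsimp only
  linarith

theorem continuousOn_l1_inv_sub_smul_one_mulVec_sub (hM : ∀ i j, 0 ≤ M i j)
    (hcol : ∀ j, ∑ i, M i j ≤ σ) (hA : A = (2 - σ) • 1 - M) :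
    ContinuousOn (fun μ => l1 ((A - μ • 1)⁻¹ *ᵥ b) - μ) (Iio (2 - 2 * σ)) := fun _ hμ =>
  ((continuous_l1.continuousAt.comp (continuousAt_inv_sub_smul_one_mulVec A b
    (isUnit_det_sub_smul_one hM hcol hA hμ))).sub continuousAt_id).continuousWithinAt

theorem existsUnique_l1_inv_sub_smul_one_mulVec_sub_eq_zero (hM : ∀ i j, 0 ≤ M i j)
    (hcol : ∀ j, ∑ i, M i j ≤ σ) (hσ : σ < 1) (hA : A = (2 - σ) • 1 - M) (hb : 0 ≤ b)
    (hb1 : l1 b < (1 - σ) ^ 2) :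
    ∃! μ, μ ∈ Icc 0 (1 - σ) ∧ l1 ((A - μ • 1)⁻¹ *ᵥ b) - μ = 0 := by
  set g : ℝ → ℝ := fun μ => l1 ((A - μ • 1)⁻¹ *ᵥ b) - μ
  have hcont : ContinuousOn g (Icc 0 (1 - σ)) :=
    (continuousOn_l1_inv_sub_smul_one_mulVec_sub hM hcol hA).mono
      fun μ hμ => show μ < 2 - 2 * σ by linarith [hμ.2]
  have hanti : StrictAntiOn g (Icc 0 (1 - σ)) :=
    (strictAntiOn_l1_inv_sub_smul_one_mulVec_sub hM hcol hσ hA hb hb1).mono Icc_subset_Iic_self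
  have hg0 : 0 ≤ g 0 := by
    rw [show g 0 = l1 ((A - (0 : ℝ) • 1)⁻¹ *ᵥ b) from sub_zero _]
    exact l1_nonneg _
  have hg1 : g (1 - σ) < 0 :=
    sub_neg.2 (l1_inv_sub_smul_one_mulVec_lt hM hcol hσ hA le_rfl hb hb1)
  obtain ⟨μ, hμ, hμ0⟩ := intermediate_value_Icc' (by linarith) hcont ⟨hg1.le, hg0⟩
  exact ⟨μ, ⟨hμ, hμ0⟩, fun ν hν => hanti.injOn hν.1 hμ (hν.2.trans hμ0.symm)⟩

end FixedPoint

/-- Existence and uniqueness (Theorem 12): `g(μ) = ‖(A-μI)⁻¹b‖₁ - μ` has exactly one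
root `μ*` in `[0, 1-σ]`, and the corresponding `x* = (A - μ*I)⁻¹b` is the unique
nonnegative solution of `Ax - ‖x‖₁x = b` with `‖x*‖₁ + σ < 1`. -/
theorem stmt_5 {n : ℕ} (M : Matrix (Fin n) (Fin n) ℝ) (hM : ∀ i j, 0 ≤ M i j)
    (σ : ℝ) (hσ : σ = op1 M) (hσ1 : σ < 1)
    (A : Matrix (Fin n) (Fin n) ℝ) (hA : A = (2 - σ) • (1 : Matrix (Fin n) (Fin n) ℝ) - M)
    (b : Fin n → ℝ) (hb : ∀ i, 0 ≤ b i) (hb1 : l1 b < (1 - σ) ^ 2) :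
    (∃! μ : ℝ, μ ∈ Icc (0 : ℝ) (1 - σ) ∧ l1 ((A - μ • 1)⁻¹.mulVec b) - μ = 0) ∧
    (∀ μ : ℝ, μ ∈ Icc (0 : ℝ) (1 - σ) → l1 ((A - μ • 1)⁻¹.mulVec b) - μ = 0 →
      (∀ i, 0 ≤ (A - μ • 1)⁻¹.mulVec b i) ∧
      l1 ((A - μ • 1)⁻¹.mulVec b) + σ < 1 ∧
      A.mulVec ((A - μ • 1)⁻¹.mulVec b) -
        l1 ((A - μ • 1)⁻¹.mulVec b) • ((A - μ • 1)⁻¹.mulVec b) = b ∧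
      (∀ y : Fin n → ℝ, (∀ i, 0 ≤ y i) → l1 y + σ < 1 →
        A.mulVec y - l1 y • y = b → y = (A - μ • 1)⁻¹.mulVec b)) := by
  have hcol : ∀ j, ∑ i, M i j ≤ σ := hσ ▸ colSum_le_op1 hM
  have hanti := (strictAntiOn_l1_inv_sub_smul_one_mulVec_sub hM hcol hσ1 hA hb hb1).mono
    (Icc_subset_Iic_self (a := 0))
  refine ⟨existsUnique_l1_inv_sub_smul_one_mulVec_sub_eq_zero hM hcol hσ1 hA hb hb1,
    fun μ hμ hroot => ⟨inv_sub_smul_one_mulVec_nonneg hM hcol hA (by linarith [hμ.2]) hb, ?_, ?_,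
      fun y hy hyσ hyb => ?_⟩⟩
  · linarith [l1_inv_sub_smul_one_mulVec_lt hM hcol hσ1 hA hμ.2 hb hb1]
  · have h := sub_smul_one_mulVec_inv_mulVec hM hcol hA (by linarith [hμ.2]) b
    rw [sub_mulVec, smul_mulVec, one_mulVec] at h
    rwa [sub_eq_zero.1 hroot]
  · have hμy : l1 y ∈ Icc 0 (1 - σ) := ⟨l1_nonneg y, by linarith⟩
    have hy_eq : y = (A - l1 y • 1)⁻¹ *ᵥ b := eq_inv_mulVec_of_mulVec_eq
      (isUnit_det_sub_smul_one hM hcol hA (by linarith [hμy.2]))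
      (by rwa [sub_mulVec, smul_mulVec, one_mulVec])
    have : l1 y = μ := hanti.injOn hμy hμ (by simp only [← hy_eq, sub_self, hroot])
    rwa [← this]
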